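/- Let k be a division ring, σ an automorphism of k, and δ a σ-derivation of k. In the skew power/Laurent series division ring k_{σ,δ}((z)) (with left multiplication rule a·z = Σ_{i≥1} zⁱ (σ∘δ^{i-1})(a)), every element algebraic over k lies in k; i.e., k_{σ,δ}((z))/k is a regular extension. -/

import Mathlib

/-!
If `w ≠ 0` has `v w ≠ 0`, the terms of a nontrivial left `k`-combination `∑ ι (g i) * w ^ i`
have pairwise distinct valuations `i * v w`, so by the ultrametric inequality the sum cannot
vanish: the powers of `w` are left `k`-linearly independent. If `x` is algebraic, `k(x)` is a
finite-dimensional left `k`-space, so the powers of any of its elements are dependent; hence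
every nonzero element of `k(x)` has valuation `0`. For `x ≠ 0` this applies to `x` itself and,
`a` being the constant coefficient of `x`, to `x - a`, which therefore vanishes.
-/

/-- `x` is algebraic over the subset `k` of the division ring `D`. -/
def IsAlgebraicOverSet {D : Type*} [DivisionRing D] (k : Set D) (x : D) : Prop :=
  ∃ (N : ℕ) (b : Fin N → D),
    (∀ y ∈ Subfield.closure (insert x k), ∃ c : Fin N → D,
      (∀ i, c i ∈ k) ∧ y = ∑ i, c i * b i) ∧
    (∀ y ∈ Subfield.closure (insert x k), ∃ c : Fin N → D,
      (∀ i, c i ∈ k) ∧ y = ∑ i, b i * c i)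

section Valuation

variable {D : Type*} [DivisionRing D] {v : D → ℤ}
  (hvmul : ∀ x y : D, x ≠ 0 → y ≠ 0 → v (x * y) = v x + v y)
include hvmul

theorem v_one : v 1 = 0 := by
  have h := hvmul 1 1 one_ne_zero one_ne_zero
  rw [mul_one] at h
  omega

theorem v_neg (w : D) : v (-w) = v w := by
  rcases eq_or_ne w 0 with rfl | hw
  · rw [neg_zero]
  have hsq := hvmul (-1) (-1) (neg_ne_zero.2 one_ne_zero) (neg_ne_zero.2 one_ne_zero)
  rw [neg_one_mul, neg_neg, v_one hvmul] at hsq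
  rw [← neg_one_mul, hvmul _ _ (neg_ne_zero.2 one_ne_zero) hw]
  omega

theorem v_pow {w : D} (hw : w ≠ 0) (n : ℕ) : v (w ^ n) = n * v w := by
  induction n with
  | zero => simp [v_one hvmul]
  | succ n ih =>
    rw [pow_succ, hvmul _ _ (pow_ne_zero n hw) hw, ih]
    push_cast
    ring

variable
  (hvadd : ∀ x y : D, x ≠ 0 → y ≠ 0 → x + y ≠ 0 → min (v x) (v y) ≤ v (x + y))
include hvadd

theorem v_add_of_lt {x y : D} (hx : x ≠ 0) (hy : y ≠ 0) (hxy : x + y ≠ 0) (hlt : v x < v y) :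
    v (x + y) = v x := by
  have h₁ := hvadd x y hx hy hxy
  have h₂ := hvadd (x + y) (-y) hxy (neg_ne_zero.2 hy) (by rwa [add_neg_cancel_right])
  rw [add_neg_cancel_right, v_neg hvmul] at h₂
  omega

theorem add_ne_zero_and_v_add_of_v_ne {x y : D} (hx : x ≠ 0) (hy : y ≠ 0) (hne : v x ≠ v y) :
    x + y ≠ 0 ∧ v (x + y) = min (v x) (v y) := by
  have hxy : x + y ≠ 0 := by
    intro h
    rw [eq_neg_of_add_eq_zero_left h, v_neg hvmul] at hne
    exact hne rfl
  refine ⟨hxy, ?_⟩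
  rcases lt_or_gt_of_ne hne with hlt | hlt
  · rw [v_add_of_lt hvmul hvadd hx hy hxy hlt, min_eq_left hlt.le]
  · rw [add_comm] at hxy ⊢
    rw [v_add_of_lt hvmul hvadd hy hx hxy hlt, min_eq_right hlt.le]

theorem sum_ne_zero_and_exists_v_sum_eq {α : Type*} {s : Finset α} (hs : s.Nonempty)
    {t : α → D} (ht : ∀ i ∈ s, t i ≠ 0) (hinj : Set.InjOn (v ∘ t) s) :
    ∑ i ∈ s, t i ≠ 0 ∧ ∃ i ∈ s, v (∑ i ∈ s, t i) = v (t i) := by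
  classical
  induction s using Finset.cons_induction with
  | empty => exact absurd hs Finset.not_nonempty_empty
  | cons a s ha ih =>
    rw [Finset.sum_cons]
    have hta : t a ≠ 0 := ht a (Finset.mem_cons_self a s)
    rcases s.eq_empty_or_nonempty with rfl | hs'
    · simpa using hta
    obtain ⟨hsum, i, his, hvi⟩ := ih hs' (fun j hj => ht j (Finset.mem_cons_of_mem hj))
      (hinj.mono (Finset.coe_subset.2 (Finset.subset_cons ha)))
    have hne : v (t a) ≠ v (∑ j ∈ s, t j) := by
      rw [hvi]
      intro h
      have := hinj (by simp) (by simp [his]) h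
      exact ha (this ▸ his)
    obtain ⟨hadd, hmin⟩ := add_ne_zero_and_v_add_of_v_ne hvmul hvadd hta hsum hne
    refine ⟨hadd, ?_⟩
    rcases min_choice (v (t a)) (v (∑ j ∈ s, t j)) with hm | hm
    · exact ⟨a, Finset.mem_cons_self a s, by rw [hmin, hm]⟩
    · exact ⟨i, Finset.mem_cons_of_mem his, by rw [hmin, hm, hvi]⟩

variable {k : Type*} [DivisionRing k] {ι : k →+* D}
  (hvconst : ∀ a : k, a ≠ 0 → v (ι a) = 0)
include hvconst

theorem sum_mul_pow_ne_zero {w : D} (hw : w ≠ 0) (hvw : v w ≠ 0) {s : Finset ℕ}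
    {g : ℕ → k} (hg : ∃ i ∈ s, g i ≠ 0) : ∑ i ∈ s, ι (g i) * w ^ i ≠ 0 := by
  classical
  obtain ⟨i₀, hi₀s, hi₀⟩ := hg
  have hterm : ∀ {i}, g i ≠ 0 → ι (g i) * w ^ i ≠ 0 := fun hi =>
    mul_ne_zero ((map_ne_zero ι).2 hi) (pow_ne_zero _ hw)
  have hv : ∀ {i}, ι (g i) * w ^ i ≠ 0 → v (ι (g i) * w ^ i) = i * v w := fun {i} hi => by
    have hgi : g i ≠ 0 := fun h => hi (by rw [h, map_zero, zero_mul])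
    rw [hvmul _ _ ((map_ne_zero ι).2 hgi) (pow_ne_zero _ hw), hvconst _ hgi,
      v_pow hvmul hw, zero_add]
  rw [← Finset.sum_filter_ne_zero]
  refine (sum_ne_zero_and_exists_v_sum_eq hvmul hvadd ⟨i₀, ?_⟩ (fun i hi => ?_) ?_).1
  · simpa [hi₀s] using hterm hi₀
  · exact (Finset.mem_filter.1 hi).2
  · intro i hi j hj hij
    simp only [Finset.coe_filter, Set.mem_ofPred_eq] at hi hj
    simp only [Function.comp_apply, hv hi.2, hv hj.2] at hij
    exact_mod_cast mul_right_cancel₀ hvw hij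

end Valuation

theorem IsAlgebraicOverSet.exists_sum_mul_pow_eq_zero {k D : Type*} [DivisionRing k]
    [DivisionRing D] {ι : k →+* D} {x : D} (hx : IsAlgebraicOverSet (Set.range ι) x) {w : D}
    (hw : w ∈ Subfield.closure (insert x (Set.range ι))) :
    ∃ (s : Finset ℕ) (g : ℕ → k),
      ∑ i ∈ s, ι (g i) * w ^ i = 0 ∧ ∃ i ∈ s, g i ≠ 0 := by
  let _ : Module k D := Module.compHom D ι
  obtain ⟨N, b, hleft, -⟩ := hx
  have hspan : Set.range (fun n : ℕ => w ^ n) ≤ Submodule.span k (Set.range b) := by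
    rintro _ ⟨n, rfl⟩
    simp only
    obtain ⟨c, hc, hsum⟩ := hleft (w ^ n) (pow_mem hw n)
    rw [hsum]
    refine Submodule.sum_mem _ fun i _ => ?_
    obtain ⟨a, ha⟩ := hc i
    rw [← ha]
    exact Submodule.smul_mem _ a (Submodule.subset_span (Set.mem_range_self i))
  have hdep : ¬LinearIndependent k (fun n : ℕ => w ^ n) := fun hli =>
    have := hli.finite_of_le_span_finite _ _ hspan
    not_finite ℕ
  exact not_linearIndependent_iff.1 hdep

theorem v_eq_zero_of_mem_closure {k D : Type*} [DivisionRing k] [DivisionRing D]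
    {ι : k →+* D} {v : D → ℤ}
    (hvmul : ∀ x y : D, x ≠ 0 → y ≠ 0 → v (x * y) = v x + v y)
    (hvadd : ∀ x y : D, x ≠ 0 → y ≠ 0 → x + y ≠ 0 → min (v x) (v y) ≤ v (x + y))
    (hvconst : ∀ a : k, a ≠ 0 → v (ι a) = 0) {x : D}
    (hx : IsAlgebraicOverSet (Set.range ι) x) {w : D}
    (hw : w ∈ Subfield.closure (insert x (Set.range ι))) (hw₀ : w ≠ 0) : v w = 0 := by
  by_contra hvw
  obtain ⟨s, g, hsum, hg⟩ := hx.exists_sum_mul_pow_eq_zero hw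
  exact sum_mul_pow_ne_zero hvmul hvadd hvconst hw₀ hvw hg hsum

theorem skew_laurent_series_regular_general
    {k D : Type*} [DivisionRing k] [DivisionRing D]
    (ι : k →+* D)
    (v : D → ℤ)
    (hvmul : ∀ x y : D, x ≠ 0 → y ≠ 0 → v (x * y) = v x + v y)
    (hvadd : ∀ x y : D, x ≠ 0 → y ≠ 0 → x + y ≠ 0 → min (v x) (v y) ≤ v (x + y))
    (hvconst : ∀ a : k, a ≠ 0 → v (ι a) = 0)
    (hres : ∀ x : D, x ≠ 0 → v x = 0 →
      ∃ a : k, x = ι a ∨ (x - ι a ≠ 0 ∧ v (x - ι a) ≠ 0)) :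
    ∀ x : D, IsAlgebraicOverSet (Set.range ι) x → x ∈ Set.range ι := by
  intro x hx
  rcases eq_or_ne x 0 with rfl | hx₀
  · exact ⟨0, map_zero ι⟩
  set K := Subfield.closure (insert x (Set.range ι))
  have hv : ∀ w ∈ K, w ≠ 0 → v w = 0 := fun _ hw hw₀ =>
    v_eq_zero_of_mem_closure hvmul hvadd hvconst hx hw hw₀
  have hxK : x ∈ K := Subfield.subset_closure (Set.mem_insert _ _)
  obtain ⟨a, rfl | ⟨hxa, hvxa⟩⟩ := hres x hx₀ (hv x hxK hx₀)
  · exact Set.mem_range_self a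
  · have haK : ι a ∈ K :=
      Subfield.subset_closure (Set.mem_insert_of_mem _ (Set.mem_range_self a))
    exact absurd (hv _ (sub_mem hxK haK) hxa) hvxa

/-- The skew Laurent series division ring `k_{σ,δ}((z))` is a regular extension of `k`.
Here `σ` is an automorphism of `k` and `δ` a `σ`-derivation, and the division ring `D`
models `k_{σ,δ}((z))`: it carries the `z`-adic valuation `v` (multiplicative, ultrametric,
trivial on the coefficient field `ι(k)`, with `v(z) = 1`), and every element of valuation
`0` is, up to subtracting its constant coefficient in `k`, of nonzero valuation.  Then
every element of `D` algebraic over `k` lies in `k`. -/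
theorem skew_laurent_series_regular
    {k D : Type*} [DivisionRing k] [DivisionRing D]
    (σ : k ≃+* k) (δ : k →+ k)
    (hδ : ∀ a b : k, δ (a * b) = σ a * δ b + δ a * b)
    (ι : k →+* D) (z : D) (hz : z ≠ 0)
    (v : D → ℤ) (hvz : v z = 1)
    (hvmul : ∀ x y : D, x ≠ 0 → y ≠ 0 → v (x * y) = v x + v y)
    (hvadd : ∀ x y : D, x ≠ 0 → y ≠ 0 → x + y ≠ 0 → min (v x) (v y) ≤ v (x + y))
    (hvconst : ∀ a : k, a ≠ 0 → v (ι a) = 0)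
    (hres : ∀ x : D, x ≠ 0 → v x = 0 →
      ∃ a : k, x = ι a ∨ (x - ι a ≠ 0 ∧ v (x - ι a) ≠ 0)) :
    ∀ x : D, IsAlgebraicOverSet (Set.range ι) x → x ∈ Set.range ι :=
  skew_laurent_series_regular_general ι v hvmul hvadd hvconst hres
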